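/- (Termination bound for the multiplicative-weights boosting process.) Let L ≥ 2 be an integer, X a finite set, μ a probability distribution on X, g* : X → Δ_L, and ε ∈ (0,1). Suppose h_0, h_1, …, h_K : X → ℝ^L satisfy: h_0(x) = 0 for all x ∈ X, and for each k < K there is a function f_k : X → ℝ^L with ‖f_k(x)‖∞ ≤ 1 for all x, such that h_{k+1} = h_k − ε f_k and ⟨softmax∘h_k − g*, f_k⟩_μ > ε. Then K < 2 ln L / ε². -/

import Mathlib

/-!
The potential `Φ(v) = E_μ[log ∑_y e^{v(x)_y} - ⟨g*(x), v(x)⟩]` is the `μ`-average of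
`KL(g*(x) ‖ softmax (v x))` plus the entropy of `g*(x)`, so `Φ ≥ 0`, and `Φ(0) = log L`.
Hoeffding's lemma for the distribution `softmax (h_k x)` shows that the step
`h_{k+1} = h_k - ε f_k` changes `Φ` by at most `-ε ⟨softmax∘h_k - g*, f_k⟩_μ + ε²/2 < -ε²/2`.
Hence `K ε²/2 < log L`.
-/

noncomputable section

/-- Standard inner product on `ℝ^L`. -/
def dot {L : ℕ} (g h : Fin L → ℝ) : ℝ := ∑ y, g y * h y

/-- The probability simplex `Δ_L ⊆ ℝ^L`. -/
def simplex (L : ℕ) : Set (Fin L → ℝ) :=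
  {v | (∀ y, 0 ≤ v y) ∧ ∑ y, v y = 1}

/-- Softmax function `softmax(h)_y = e^{h_y} / ∑_z e^{h_z}`. -/
def softmax {L : ℕ} (h : Fin L → ℝ) : Fin L → ℝ :=
  fun y => Real.exp (h y) / ∑ z, Real.exp (h z)

/-- `⟨g,h⟩_μ = E_{x∼μ}[⟨g(x),h(x)⟩]`. -/
def innerMu {X : Type*} [Fintype X] {L : ℕ} (μ : X → ℝ)
    (g h : X → Fin L → ℝ) : ℝ := ∑ x, μ x * dot (g x) (h x)


open Real Finset MeasureTheory ProbabilityTheory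

/-- Hoeffding's lemma, for a distribution `p` on a finite type. -/
theorem log_sum_mul_exp_mul_le {ι : Type*} [Fintype ι] {p f : ι → ℝ} (hp0 : ∀ y, 0 ≤ p y)
    (hp1 : ∑ y, p y = 1) (hf : ∀ y, |f y| ≤ 1) (t : ℝ) :
    log (∑ y, p y * exp (t * f y)) ≤ t * ∑ y, p y * f y + t ^ 2 / 2 := by
  let _ : MeasurableSpace ι := ⊤
  let ν : Measure ι := ∑ y, ENNReal.ofReal (p y) • Measure.dirac y
  have hν (g : ι → ℝ) : ∫ y, g y ∂ν = ∑ y, p y * g y := by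
    rw [integral_finsetSum_measure fun y _ =>
      (integrable_dirac (by simp)).smul_measure ENNReal.ofReal_ne_top]
    simp [integral_smul_measure, hp0]
  have : IsProbabilityMeasure ν :=
    ⟨by simp [ν, ← ENNReal.ofReal_sum_of_nonneg fun y _ => hp0 y, hp1]⟩
  have hoeffding := (hasSubgaussianMGF_of_mem_Icc (μ := ν) (a := -1) (b := 1)
    Measurable.of_discrete.aemeasurable (ae_of_all _ fun y => abs_le.mp (hf y))).mgf_le t
  simp only [sub_eq_add_neg] at hoeffding
  rw [mgf_add_const, hν] at hoeffding
  have hpos : 0 < mgf f ν t := mgf_pos .of_finite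
  rw [mgf, hν] at hpos hoeffding
  norm_num at hoeffding
  rw [exp_neg, ← div_eq_mul_inv, div_le_iff₀ (exp_pos _), ← exp_add] at hoeffding
  rw [← log_exp (t * _ + _), add_comm]
  exact log_le_log hpos hoeffding

theorem natCast_mul_lt_of_forall_succ_lt_sub {a : ℕ → ℝ} {c : ℝ} {K : ℕ} (hK : 0 < K)
    (hstep : ∀ k < K, a (k + 1) < a k - c) (haK : 0 ≤ a K) : K * c < a 0 := by
  calc (K : ℝ) * c = ∑ _k ∈ range K, c := by simp
    _ < ∑ k ∈ range K, (a k - a (k + 1)) :=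
      sum_lt_sum_of_nonempty (nonempty_range_iff.mpr hK.ne') fun k hk => by
        linarith [hstep k (mem_range.mp hk)]
    _ = a 0 - a K := sum_range_sub' a K
    _ ≤ a 0 := by linarith

section Softmax

variable {L : ℕ}

theorem dot_eq_dotProduct (g h : Fin L → ℝ) : dot g h = g ⬝ᵥ h := rfl

theorem softmax_nonneg (v : Fin L → ℝ) (y : Fin L) : 0 ≤ softmax v y :=
  div_nonneg (exp_pos _).le (sum_nonneg fun _ _ => (exp_pos _).le)

theorem sum_softmax [NeZero L] (v : Fin L → ℝ) : ∑ y, softmax v y = 1 := by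
  unfold softmax
  rw [← sum_div, div_self (sum_pos (fun z _ => exp_pos (v z)) univ_nonempty).ne']

theorem dot_le_log_sum_exp {g : Fin L → ℝ} (hg : g ∈ simplex L) (v : Fin L → ℝ) :
    dot g v ≤ log (∑ y, exp (v y)) := by
  obtain ⟨hg0, hg1⟩ := hg
  calc dot g v ≤ ∑ y, g y * log (∑ z, exp (v z)) := by
        refine sum_le_sum fun y _ => mul_le_mul_of_nonneg_left ?_ (hg0 y)
        rw [← log_exp (v y)]
        exact log_le_log (exp_pos _)
          (single_le_sum (fun z _ => (exp_pos (v z)).le) (mem_univ y))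
    _ = log (∑ z, exp (v z)) := by rw [← sum_mul, hg1, one_mul]

theorem log_sum_exp_sub_smul_le [NeZero L] (v : Fin L → ℝ) {f : Fin L → ℝ}
    (hf : ∀ y, |f y| ≤ 1) (t : ℝ) :
    log (∑ y, exp ((v - t • f) y)) ≤
      log (∑ y, exp (v y)) - t * dot (softmax v) f + t ^ 2 / 2 := by
  have hZ : 0 < ∑ y, exp (v y) := sum_pos (fun z _ => exp_pos (v z)) univ_nonempty
  have hsplit : ∑ y, exp ((v - t • f) y) =
      (∑ y, exp (v y)) * ∑ y, softmax v y * exp (-t * f y) := by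
    rw [mul_sum]
    refine sum_congr rfl fun y _ => ?_
    simp only [softmax, Pi.sub_apply, Pi.smul_apply, smul_eq_mul, sub_eq_add_neg, exp_add]
    field_simp
  have hexp_pos : 0 < ∑ y, softmax v y * exp (-t * f y) := by
    rw [← mul_lt_mul_iff_right₀ hZ, mul_zero, ← hsplit]
    exact sum_pos (fun y _ => exp_pos _) univ_nonempty
  rw [hsplit, log_mul hZ.ne' hexp_pos.ne']
  have hoeffding := log_sum_mul_exp_mul_le (softmax_nonneg v) (sum_softmax v) hf (-t)
  rw [dot]
  linarith

end Softmax

section Potential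

variable {X : Type*} [Fintype X] {L : ℕ}

def boostPotential (μ : X → ℝ) (gs v : X → Fin L → ℝ) : ℝ :=
  ∑ x, μ x * (log (∑ y, exp (v x y)) - dot (gs x) (v x))

theorem boostPotential_nonneg {μ : X → ℝ} (hμ0 : ∀ x, 0 ≤ μ x) {gs : X → Fin L → ℝ}
    (hgs : ∀ x, gs x ∈ simplex L) (v : X → Fin L → ℝ) : 0 ≤ boostPotential μ gs v :=
  sum_nonneg fun x _ => mul_nonneg (hμ0 x) (sub_nonneg.mpr (dot_le_log_sum_exp (hgs x) (v x)))

theorem boostPotential_zero {μ : X → ℝ} (hμ1 : ∑ x, μ x = 1) (gs : X → Fin L → ℝ) :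
    boostPotential μ gs 0 = log L := by
  simp [boostPotential, dot, ← sum_mul, hμ1]

theorem boostPotential_sub_smul_le [NeZero L] {μ : X → ℝ} (hμ0 : ∀ x, 0 ≤ μ x)
    (hμ1 : ∑ x, μ x = 1) (gs v : X → Fin L → ℝ) {f : X → Fin L → ℝ}
    (hf : ∀ x y, |f x y| ≤ 1) (t : ℝ) :
    boostPotential μ gs (fun x => v x - t • f x) ≤
      boostPotential μ gs v - t * innerMu μ (fun x => softmax (v x) - gs x) f + t ^ 2 / 2 := by
  have hpointwise (x : X) :
      log (∑ y, exp ((v x - t • f x) y)) - dot (gs x) (v x - t • f x) ≤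
        log (∑ y, exp (v x y)) - dot (gs x) (v x) - t * dot (softmax (v x) - gs x) (f x)
          + t ^ 2 / 2 := by
    have := log_sum_exp_sub_smul_le (v x) (hf x) t
    simp only [dot_eq_dotProduct, dotProduct_sub, dotProduct_smul, sub_dotProduct,
      smul_eq_mul] at this ⊢
    linarith
  calc boostPotential μ gs (fun x => v x - t • f x)
      ≤ ∑ x, μ x * (log (∑ y, exp (v x y)) - dot (gs x) (v x)
          - t * dot (softmax (v x) - gs x) (f x) + t ^ 2 / 2) :=
        sum_le_sum fun x _ => mul_le_mul_of_nonneg_left (hpointwise x) (hμ0 x)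
    _ = _ := by
      simp only [boostPotential, innerMu, mul_add, mul_sub, sum_add_distrib, sum_sub_distrib,
        ← sum_mul, hμ1, one_mul, mul_sum, mul_left_comm (μ _) t]

end Potential

theorem mw_termination_general {X : Type*} [Fintype X] {L : ℕ} (hL : 2 ≤ L)
    (μ : X → ℝ) (hμ0 : ∀ x, 0 ≤ μ x) (hμ1 : ∑ x, μ x = 1)
    (gs : X → Fin L → ℝ) (hgs : ∀ x, gs x ∈ simplex L)
    (ε : ℝ) (hε0 : 0 < ε)
    (K : ℕ) (h f : ℕ → X → Fin L → ℝ)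
    (h0 : ∀ x, h 0 x = 0)
    (hstep : ∀ k < K, (∀ x y, |f k x y| ≤ 1) ∧
      (h (k + 1) = fun x => h k x - ε • f k x) ∧
      innerMu μ (fun x => softmax (h k x) - gs x) (f k) > ε) :
    (K : ℝ) < 2 * Real.log L / ε ^ 2 := by
  have : NeZero L := ⟨by omega⟩
  have hlogL : 0 < log L := log_pos (by exact_mod_cast hL)
  have hh0 : h 0 = 0 := funext h0
  have hdescent : K * (ε ^ 2 / 2) < log L := by
    rcases Nat.eq_zero_or_pos K with rfl | hK
    · simpa using hlogL
    rw [← boostPotential_zero hμ1 gs, ← hh0]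
    refine natCast_mul_lt_of_forall_succ_lt_sub (a := fun k => boostPotential μ gs (h k)) hK
      (fun k hk => ?_) (boostPotential_nonneg hμ0 hgs _)
    obtain ⟨hf, hnext, hcorr⟩ := hstep k hk
    have hdescent_step := boostPotential_sub_smul_le hμ0 hμ1 gs (h k) hf ε
    rw [← hnext] at hdescent_step
    linarith [mul_lt_mul_of_pos_left hcorr hε0]
  rw [lt_div_iff₀ (by positivity)]
  linarith

/-- Termination bound for the multiplicative-weights boosting process: starting from
`h_0 = 0`, if each step uses an update direction `f_k` bounded in `ℓ∞` by 1 with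
correlation `⟨softmax∘h_k - g*, f_k⟩_μ > ε` and sets `h_{k+1} = h_k - ε f_k`, then
the number of steps satisfies `K < 2 ln L / ε²`. -/
theorem mw_termination {X : Type*} [Fintype X] {L : ℕ} (hL : 2 ≤ L)
    (μ : X → ℝ) (hμ0 : ∀ x, 0 ≤ μ x) (hμ1 : ∑ x, μ x = 1)
    (gs : X → Fin L → ℝ) (hgs : ∀ x, gs x ∈ simplex L)
    (ε : ℝ) (hε0 : 0 < ε) (hε1 : ε < 1)
    (K : ℕ) (h f : ℕ → X → Fin L → ℝ)
    (h0 : ∀ x, h 0 x = 0)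
    (hstep : ∀ k < K, (∀ x y, |f k x y| ≤ 1) ∧
      (h (k + 1) = fun x => h k x - ε • f k x) ∧
      innerMu μ (fun x => softmax (h k x) - gs x) (f k) > ε) :
    (K : ℝ) < 2 * Real.log L / ε ^ 2 :=
  mw_termination_general hL μ hμ0 hμ1 gs hgs ε hε0 K h f h0 hstep
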